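/- Let m, q, p be positive real numbers with m < q, and let f be a real function that is monotone decreasing on the interval [(m−1)/p, (q+1)/p]. Then | Σ_{ℓ ∈ ℤ, m < ℓ < q, ℓ even} f(ℓ/p) − (p/2) ∫_{m/p}^{q/p} f(t) dt | ≤ |f(m/p)| + |f(q/p)|, and likewise | Σ_{ℓ ∈ ℤ, m < ℓ < q, ℓ odd} f(ℓ/p) − (p/2) ∫_{m/p}^{q/p} f(t) dt | ≤ |f(m/p)| + |f(q/p)|. -/

import Mathlib

/-!
For `g` antitone on `[α, β]`, extending `g` by constants gives a function `G` antitone on all of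
`ℝ`, and comparing sums with integrals puts `∑_{α < k < β} g k` between `∫_{⌊α⌋+1}^{⌈β⌉} G` and
`∫_{⌊α⌋}^{⌈β⌉-1} G`. These differ from `∫_α^β g` by integrals over intervals of length at most
one at the two ends, where `G` is bounded by `g α` and `g β`. The sum over `ℓ ≡ r (mod d)` reduces
to this case through `ℓ = d k + r` and the substitution `t ↦ (d t + r) / p`.
-/

open Set

theorem Int.mem_Ioo_floor_ceil {α : Type*} [Ring α] [LinearOrder α] [FloorRing α] {x y : α}
    {k : ℤ} : k ∈ Finset.Ioo ⌊x⌋ ⌈y⌉ ↔ x < k ∧ (k : α) < y := by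
  rw [Finset.mem_Ioo, Int.floor_lt, Int.lt_ceil]

theorem AntitoneOn.exists_antitone_extension_const {α β : Type*} [LinearOrder α] [Preorder β]
    {a b : α} {g : α → β} (hg : AntitoneOn g (Icc a b)) (hab : a ≤ b) :
    ∃ G : α → β, Antitone G ∧ EqOn G g (Icc a b) ∧ (∀ t ≤ a, G t = g a) ∧
      ∀ t, b ≤ t → G t = g b :=
  ⟨IccExtend hab (g ∘ Subtype.val),
    fun _ _ hst => hg (projIcc a b hab _).2 (projIcc a b hab _).2 (monotone_projIcc hab hst),
    fun _ ht => IccExtend_of_mem _ _ ht, fun _ ht => IccExtend_of_le_left _ _ ht,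
    fun _ ht => IccExtend_of_right_le _ _ ht⟩

section

variable {g : ℝ → ℝ} {x y : ℝ}

theorem AntitoneOn.intervalIntegrable_of_le (hg : AntitoneOn g (Icc x y)) (hxy : x ≤ y) :
    IntervalIntegrable g MeasureTheory.volume x y :=
  AntitoneOn.intervalIntegrable (by rwa [uIcc_of_le hxy])

theorem AntitoneOn.sub_mul_le_integral (hg : AntitoneOn g (Icc x y)) (hxy : x ≤ y) :
    (y - x) * g y ≤ ∫ t in x..y, g t := by
  simpa using intervalIntegral.integral_mono_on hxy intervalIntegrable_const
    (hg.intervalIntegrable_of_le hxy) fun t ht => hg ht ⟨hxy, le_rfl⟩ ht.2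

theorem AntitoneOn.integral_le_sub_mul (hg : AntitoneOn g (Icc x y)) (hxy : x ≤ y) :
    ∫ t in x..y, g t ≤ (y - x) * g x := by
  simpa using intervalIntegral.integral_mono_on hxy (hg.intervalIntegrable_of_le hxy)
    intervalIntegrable_const fun t ht => hg ⟨le_rfl, hxy⟩ ht ht.1

theorem AntitoneOn.integral_le_sum_Ioo {a b : ℤ} (hg : AntitoneOn g (Icc (a : ℝ) b))
    (hab : a < b) :
    ∫ t in (a + 1 : ℝ)..b, g t ≤ ∑ k ∈ Finset.Ioo a b, g k ∧
      ∑ k ∈ Finset.Ioo a b, g k ≤ ∫ t in (a : ℝ)..(b - 1), g t := by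
  set n := (b - a - 1).toNat
  have hn : ((n : ℤ) : ℝ) = b - a - 1 := by
    rw [Int.toNat_of_nonneg (by omega)]; push_cast; ring
  push_cast at hn
  have hsum : ∑ k ∈ Finset.Ioo a b, g k = ∑ i ∈ Finset.range n, g ((a + 1 : ℝ) + i) := by
    simp [Int.Ioo_eq_finset_map, n, add_assoc]
  have hupper : (a + 1 : ℝ) + n = b := by linarith
  have hlower : (a : ℝ) + n = b - 1 := by linarith
  refine ⟨?_, ?_⟩
  · rw [hsum, ← hupper]
    exact AntitoneOn.integral_le_sum (hg.mono (Icc_subset_Icc (by linarith) hupper.le))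
  · have := AntitoneOn.sum_le_integral (x₀ := (a : ℝ)) (a := n)
      (hg.mono (Icc_subset_Icc le_rfl (by linarith)))
    rw [hsum, ← hlower]
    convert this using 3
    push_cast; ring

theorem Antitone.sum_Ioo_floor_ceil_sub_integral_le {G : ℝ → ℝ} (hG : Antitone G) {α β : ℝ}
    (hαβ : α < β) :
    ∑ k ∈ Finset.Ioo ⌊α⌋ ⌈β⌉, G k - ∫ t in α..β, G t ≤
      (α - ⌊α⌋) * G ⌊α⌋ - (β - (⌈β⌉ - 1)) * G β :=
  calc ∑ k ∈ Finset.Ioo ⌊α⌋ ⌈β⌉, G k - ∫ t in α..β, G t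
      ≤ (∫ t in (⌊α⌋ : ℝ)..(⌈β⌉ - 1), G t) - ∫ t in α..β, G t := by
        gcongr
        exact ((hG.antitoneOn _).integral_le_sum_Ioo (Int.floor_lt_ceil_of_lt hαβ)).2
    _ = (∫ t in (⌊α⌋ : ℝ)..α, G t) - ∫ t in (⌈β⌉ - 1 : ℝ)..β, G t :=
      intervalIntegral.integral_interval_sub_interval_comm hG.intervalIntegrable
        hG.intervalIntegrable hG.intervalIntegrable
    _ ≤ _ := by
      gcongr
      · exact (hG.antitoneOn _).integral_le_sub_mul (Int.floor_le α)
      · exact (hG.antitoneOn _).sub_mul_le_integral (by linarith [Int.ceil_lt_add_one β])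

theorem Antitone.integral_sub_sum_Ioo_floor_ceil_le {G : ℝ → ℝ} (hG : Antitone G) {α β : ℝ}
    (hαβ : α < β) :
    (∫ t in α..β, G t) - ∑ k ∈ Finset.Ioo ⌊α⌋ ⌈β⌉, G k ≤
      (⌊α⌋ + 1 - α) * G α - (⌈β⌉ - β) * G ⌈β⌉ :=
  calc (∫ t in α..β, G t) - ∑ k ∈ Finset.Ioo ⌊α⌋ ⌈β⌉, G k
      ≤ (∫ t in α..β, G t) - ∫ t in (⌊α⌋ + 1 : ℝ)..⌈β⌉, G t := by
        gcongr
        exact ((hG.antitoneOn _).integral_le_sum_Ioo (Int.floor_lt_ceil_of_lt hαβ)).1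
    _ = (∫ t in α..(⌊α⌋ + 1 : ℝ), G t) - ∫ t in β..(⌈β⌉ : ℝ), G t :=
      intervalIntegral.integral_interval_sub_interval_comm hG.intervalIntegrable
        hG.intervalIntegrable hG.intervalIntegrable
    _ ≤ _ := by
      gcongr
      · exact (hG.antitoneOn _).integral_le_sub_mul (Int.lt_floor_add_one α).le
      · exact (hG.antitoneOn _).sub_mul_le_integral (Int.le_ceil β)

theorem mul_le_abs_of_mem_Icc {c x : ℝ} (hc : c ∈ Icc (0 : ℝ) 1) : c * x ≤ |x| :=
  (le_abs_self _).trans <| by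
    rw [abs_mul, abs_of_nonneg hc.1]; exact mul_le_of_le_one_left (abs_nonneg x) hc.2

theorem AntitoneOn.abs_sum_Ioo_floor_ceil_sub_integral_le {α β : ℝ}
    (hg : AntitoneOn g (Icc α β)) (hαβ : α < β) :
    |∑ k ∈ Finset.Ioo ⌊α⌋ ⌈β⌉, g k - ∫ t in α..β, g t| ≤ |g α| + |g β| := by
  obtain ⟨G, hG, hGg, hGα, hGβ⟩ := hg.exists_antitone_extension_const hαβ.le
  have hsum : ∑ k ∈ Finset.Ioo ⌊α⌋ ⌈β⌉, g k = ∑ k ∈ Finset.Ioo ⌊α⌋ ⌈β⌉, G k :=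
    Finset.sum_congr rfl fun k hk =>
      (hGg ⟨(Int.mem_Ioo_floor_ceil.1 hk).1.le, (Int.mem_Ioo_floor_ceil.1 hk).2.le⟩).symm
  have hint : ∫ t in α..β, g t = ∫ t in α..β, G t :=
    intervalIntegral.integral_congr fun t ht => (hGg (by rwa [uIcc_of_le hαβ.le] at ht)).symm
  have hneg {c : ℝ} (hc : c ∈ Icc (0 : ℝ) 1) : -(c * g β) ≤ |g β| := by
    simpa using mul_le_abs_of_mem_Icc (x := -g β) hc
  rw [hsum, hint, abs_sub_le_iff]
  constructor
  · refine (hG.sum_Ioo_floor_ceil_sub_integral_le hαβ).trans ?_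
    rw [hGα _ (Int.floor_le α), hGβ β le_rfl, sub_eq_add_neg]
    gcongr
    · exact mul_le_abs_of_mem_Icc
        ⟨by linarith [Int.floor_le α], by linarith [Int.lt_floor_add_one α]⟩
    · exact hneg ⟨by linarith [Int.ceil_lt_add_one β], by linarith [Int.le_ceil β]⟩
  · refine (hG.integral_sub_sum_Ioo_floor_ceil_le hαβ).trans ?_
    rw [hGα α le_rfl, hGβ _ (Int.le_ceil β), sub_eq_add_neg]
    gcongr
    · exact mul_le_abs_of_mem_Icc
        ⟨by linarith [Int.lt_floor_add_one α], by linarith [Int.floor_le α]⟩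
    · exact hneg ⟨by linarith [Int.le_ceil β], by linarith [Int.ceil_lt_add_one β]⟩

end

theorem Int.sum_filter_emod_Ioo_floor_ceil {M : Type*} [AddCommMonoid M] {d r : ℤ} (hd : 0 < d)
    (hr0 : 0 ≤ r) (hrd : r < d) (m q : ℝ) (h : ℤ → M) :
    ∑ ℓ ∈ (Finset.Ioo ⌊m⌋ ⌈q⌉).filter (· % d = r), h ℓ =
      ∑ k ∈ Finset.Ioo ⌊(m - r) / d⌋ ⌈(q - r) / d⌉, h (d * k + r) := by
  have hd' : (0 : ℝ) < d := by exact_mod_cast hd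
  have hfilter : (Finset.Ioo ⌊m⌋ ⌈q⌉).filter (· % d = r) =
      (Finset.Ioo ⌊(m - r) / d⌋ ⌈(q - r) / d⌉).image (fun k => d * k + r) := by
    ext ℓ
    simp only [Finset.mem_filter, Finset.mem_image, Int.mem_Ioo_floor_ceil, div_lt_iff₀ hd',
      lt_div_iff₀ hd']
    constructor
    · rintro ⟨⟨hmℓ, hℓq⟩, rfl⟩
      have hℓ : (ℓ : ℝ) = d * (ℓ / d : ℤ) + (ℓ % d : ℤ) := by
        exact_mod_cast (Int.mul_ediv_add_emod ℓ d).symm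
      exact ⟨ℓ / d, ⟨by linarith, by linarith⟩, Int.mul_ediv_add_emod ℓ d⟩
    · rintro ⟨k, ⟨hmk, hkq⟩, rfl⟩
      refine ⟨⟨by push_cast; linarith, by push_cast; linarith⟩, ?_⟩
      rw [Int.mul_add_emod_self_left, Int.emod_eq_of_lt hr0 hrd]
  rw [hfilter, Finset.sum_image fun a _ b _ hab => mul_left_cancel₀ hd.ne' (add_right_cancel hab)]

theorem AntitoneOn.abs_sum_filter_emod_sub_integral_le {f : ℝ → ℝ} {m q p : ℝ} {d r : ℤ}
    (hf : AntitoneOn f (Icc (m / p) (q / p))) (hp : 0 < p) (hmq : m < q) (hd : 0 < d)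
    (hr0 : 0 ≤ r) (hrd : r < d) :
    |∑ ℓ ∈ (Finset.Ioo ⌊m⌋ ⌈q⌉).filter (· % d = r), f (ℓ / p) -
        p / d * ∫ t in (m / p)..(q / p), f t| ≤ |f (m / p)| + |f (q / p)| := by
  have hd' : (0 : ℝ) < d := by exact_mod_cast hd
  set φ : ℝ → ℝ := fun t => d / p * t + r / p
  have hφ : ∀ x, φ ((x - r) / d) = x / p := fun x => by simp only [φ]; field_simp; ring
  have hφmono : Monotone φ := fun x y hxy => by simp only [φ]; gcongr
  have hg : AntitoneOn (fun t => f (φ t)) (Icc ((m - r) / d) ((q - r) / d)) := by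
    have hmaps := hφmono.mapsTo_Icc (a := (m - r) / d) (b := (q - r) / d)
    rw [hφ, hφ] at hmaps
    exact fun x hx y hy hxy => hf (hmaps hx) (hmaps hy) (hφmono hxy)
  have key := hg.abs_sum_Ioo_floor_ceil_sub_integral_le (by gcongr)
  have hint :
      ∫ t in (m - r) / d..(q - r) / d, f (φ t) = p / d * ∫ t in (m / p)..(q / p), f t := by
    rw [intervalIntegral.integral_comp_mul_add f (by positivity), ← hφ m, ← hφ q, smul_eq_mul,
      inv_div]
  rw [Int.sum_filter_emod_Ioo_floor_ceil hd hr0 hrd, ← hint, ← hφ m, ← hφ q]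
  convert key using 5
  simp only [φ]
  push_cast
  ring

theorem integral_approx_monotone (m q p : ℝ) (hp : 0 < p)
    (hmq : m < q) (f : ℝ → ℝ)
    (hf : AntitoneOn f (Set.Icc ((m - 1) / p) ((q + 1) / p))) :
    |(∑ ℓ ∈ (Finset.Ioo ⌊m⌋ ⌈q⌉).filter (fun ℓ => Even ℓ), f ((ℓ : ℝ) / p)) -
        (p / 2) * ∫ t in (m / p)..(q / p), f t| ≤ |f (m / p)| + |f (q / p)| ∧
    |(∑ ℓ ∈ (Finset.Ioo ⌊m⌋ ⌈q⌉).filter (fun ℓ => Odd ℓ), f ((ℓ : ℝ) / p)) -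
        (p / 2) * ∫ t in (m / p)..(q / p), f t| ≤ |f (m / p)| + |f (q / p)| := by
  have hf' : AntitoneOn f (Set.Icc (m / p) (q / p)) :=
    hf.mono (Icc_subset_Icc (by gcongr; linarith) (by gcongr; linarith))
  have h (r : ℤ) (hr0 : 0 ≤ r) (hr2 : r < 2) :=
    hf'.abs_sum_filter_emod_sub_integral_le hp hmq two_pos hr0 hr2
  simp_rw [Int.even_iff, Int.odd_iff]
  exact ⟨by simpa using h 0 le_rfl two_pos, by simpa using h 1 zero_le_one one_lt_two⟩
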